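/- Let μ and ν be Borel probability measures on ℝ with finite first moments, and let U be uniformly distributed on (0,1). Then the pair (F⁻¹(U), G⁻¹(U)), where F⁻¹ and G⁻¹ are the generalized inverses (quantile functions) of the CDFs of μ and ν, is an optimal coupling for the Wasserstein-1 distance: E[|F⁻¹(U) - G⁻¹(U)|] = d₁(μ, ν). -/

import Mathlib

open MeasureTheory ProbabilityTheory Set Filter Topology

namespace QCW1

noncomputable def qtl (m : Measure ℝ) (t : ℝ) : ℝ := sInf {x : ℝ | t ≤ cdf m x}

variable (m : Measure ℝ) [IsProbabilityMeasure m]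

lemma qset_nonempty {t : ℝ} (ht : t < 1) : {x : ℝ | t ≤ cdf m x}.Nonempty := by
  have h := (tendsto_cdf_atTop m).eventually (eventually_gt_nhds ht)
  rcases h.exists with ⟨x, hx⟩
  exact ⟨x, hx.le⟩

lemma qset_bddBelow {t : ℝ} (ht : 0 < t) : BddBelow {x : ℝ | t ≤ cdf m x} := by
  have h := (tendsto_cdf_atBot m).eventually (eventually_lt_nhds ht)
  rcases h.exists with ⟨x, hx⟩
  refine ⟨x, fun y hy => ?_⟩
  by_contra hxy
  push_neg at hxy
  exact absurd (le_trans hy (monotone_cdf m hxy.le)) (not_le.mpr hx)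

lemma qtl_le_iff {t : ℝ} (ht : t ∈ Ioo (0:ℝ) 1) (x : ℝ) :
    qtl m t ≤ x ↔ t ≤ cdf m x := by
  constructor
  · intro h
    have hne := qset_nonempty m ht.2
    have hbd := qset_bddBelow m ht.1
    set a := qtl m t with ha
    have hmem : a ∈ closure {x : ℝ | t ≤ cdf m x} := csInf_mem_closure hne hbd
    have hsub : {x : ℝ | t ≤ cdf m x} ⊆ Ici a := fun y hy => csInf_le hbd hy
    have hcont : ContinuousWithinAt (cdf m) {x : ℝ | t ≤ cdf m x} a :=
      ((cdf m).right_continuous a).mono hsub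
    have hne' : (𝓝[{x : ℝ | t ≤ cdf m x}] a).NeBot := mem_closure_iff_nhdsWithin_neBot.mp hmem
    have : t ≤ cdf m a :=
      ge_of_tendsto hcont (eventually_nhdsWithin_of_forall (fun y hy => hy))
    exact this.trans (monotone_cdf m h)
  · intro h
    exact csInf_le (qset_bddBelow m ht.1) h

lemma qtl_monotoneOn : MonotoneOn (qtl m) (Ioo (0:ℝ) 1) := by
  intro s hs t ht hst
  have h1 : qtl m t ≤ qtl m t := le_refl _
  have h2 : t ≤ cdf m (qtl m t) := (qtl_le_iff m ht _).mp h1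
  exact (qtl_le_iff m hs _).mpr (hst.trans h2)

lemma qtl_aemeasurable : AEMeasurable (qtl m) (volume.restrict (Ioo (0:ℝ) 1)) :=
  aemeasurable_restrict_of_monotoneOn measurableSet_Ioo (qtl_monotoneOn m)

lemma volume_Ioo_inter_Iic {c : ℝ} (h0 : 0 ≤ c) (h1 : c ≤ 1) :
    volume (Ioo (0:ℝ) 1 ∩ Iic c) = ENNReal.ofReal c := by
  rcases lt_or_eq_of_le h1 with h | h
  · have : Ioo (0:ℝ) 1 ∩ Iic c = Ioc 0 c := by
      ext y; simp only [mem_inter_iff, mem_Ioo, mem_Iic, mem_Ioc]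
      constructor
      · rintro ⟨⟨hy0, _⟩, hyc⟩; exact ⟨hy0, hyc⟩
      · rintro ⟨hy0, hyc⟩; exact ⟨⟨hy0, lt_of_le_of_lt hyc h⟩, hyc⟩
    rw [this, Real.volume_Ioc, sub_zero]
  · have : Ioo (0:ℝ) 1 ∩ Iic c = Ioo 0 1 := by
      rw [inter_eq_left]; intro y hy; exact (le_of_lt hy.2).trans h.ge
    rw [this, Real.volume_Ioo, ← h, sub_zero]

lemma map_qtl : (volume.restrict (Ioo (0:ℝ) 1)).map (qtl m) = m := by
  have : IsProbabilityMeasure (volume.restrict (Ioo (0:ℝ) 1)) := by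
    constructor; rw [Measure.restrict_apply_univ, Real.volume_Ioo]; norm_num
  have : IsProbabilityMeasure ((volume.restrict (Ioo (0:ℝ) 1)).map (qtl m)) :=
    Measure.isProbabilityMeasure_map (qtl_aemeasurable m)
  refine Measure.ext_of_Iic _ _ (fun x => ?_)
  rw [Measure.map_apply_of_aemeasurable (qtl_aemeasurable m) measurableSet_Iic,
    Measure.restrict_apply' measurableSet_Ioo]
  have hset : qtl m ⁻¹' Iic x ∩ Ioo 0 1 = Ioo (0:ℝ) 1 ∩ Iic (cdf m x) := by
    ext t
    simp only [mem_inter_iff, mem_preimage, mem_Iic, mem_Ioo]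
    constructor
    · rintro ⟨h1, h2⟩; exact ⟨h2, (qtl_le_iff m h2 x).mp h1⟩
    · rintro ⟨h1, h2⟩; exact ⟨(qtl_le_iff m h1 x).mpr h2, h1⟩
  rw [hset, volume_Ioo_inter_Iic (cdf_nonneg m x) (cdf_le_one m x), ofReal_cdf]

end QCW1

namespace QCW1

open ENNReal

noncomputable def step (x t : ℝ) : ℝ≥0∞ := if x ≤ t then 1 else 0

noncomputable def dd (x y t : ℝ) : ℝ≥0∞ := (step x t - step y t) + (step y t - step x t)

lemma measurable_step_prod : Measurable (fun p : ℝ × ℝ => step p.1 p.2) := by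
  have : Measurable fun p : ℝ × ℝ => p.1 - p.2 := measurable_fst.sub measurable_snd
  have hs : MeasurableSet {p : ℝ × ℝ | p.1 ≤ p.2} := measurableSet_le measurable_fst measurable_snd
  exact Measurable.ite hs measurable_const measurable_const

lemma dd_eq_indicator (x y : ℝ) :
    dd x y = (Set.Ico (min x y) (max x y)).indicator (fun _ => 1) := by
  funext t
  by_cases hx : x ≤ t <;> by_cases hy : y ≤ t <;>
    simp [dd, step, hx, hy, Set.indicator_apply, Set.mem_Ico, min_le_iff, lt_max_iff,
      not_le.mp, le_of_not_ge, zero_tsub]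

lemma lintegral_dd (x y : ℝ) : ∫⁻ t, dd x y t = ENNReal.ofReal |x - y| := by
  rw [dd_eq_indicator, lintegral_indicator measurableSet_Ico]
  simp only [lintegral_const, Measure.restrict_apply MeasurableSet.univ, Set.univ_inter,
    one_mul, Real.volume_Ico]
  rw [max_sub_min_eq_abs, abs_sub_comm]

end QCW1

namespace QCW1

open ENNReal

noncomputable def ee (a b u : ℝ) : ℝ≥0∞ := (step u a - step u b) + (step u b - step u a)

lemma ee_eq_indicator (a b : ℝ) :
    ee a b = (Set.Ioc (min a b) (max a b)).indicator (fun _ => 1) := by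
  funext u
  by_cases ha : u ≤ a <;> by_cases hb : u ≤ b <;>
    simp [ee, step, ha, hb, Set.indicator_apply, Set.mem_Ioc, min_lt_iff, le_max_iff,
      not_le.mp, le_of_not_ge, zero_tsub, not_lt.mpr]

lemma volume_Ioc_inter_Ioo {a b : ℝ} (h0 : 0 ≤ a) (hab : a ≤ b) (h1 : b ≤ 1) :
    volume (Set.Ioc a b ∩ Set.Ioo (0:ℝ) 1) = ENNReal.ofReal (b - a) := by
  rcases lt_or_eq_of_le h1 with h | h
  · have : Set.Ioc a b ∩ Set.Ioo (0:ℝ) 1 = Set.Ioc a b := by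
      rw [Set.inter_eq_left]
      intro u hu
      exact ⟨lt_of_le_of_lt h0 hu.1, lt_of_le_of_lt hu.2 h⟩
    rw [this, Real.volume_Ioc]
  · have : Set.Ioc a b ∩ Set.Ioo (0:ℝ) 1 = Set.Ioo a 1 := by
      subst h
      ext u
      simp only [Set.mem_inter_iff, Set.mem_Ioc, Set.mem_Ioo]
      constructor
      · rintro ⟨⟨h1', _⟩, _, h2'⟩; exact ⟨h1', h2'⟩
      · rintro ⟨h1', h2'⟩; exact ⟨⟨h1', h2'.le⟩, lt_of_le_of_lt h0 h1', h2'⟩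
    rw [this, Real.volume_Ioo, ← h]

lemma lintegral_ee {a b : ℝ} (h0a : 0 ≤ a) (ha1 : a ≤ 1) (h0b : 0 ≤ b) (hb1 : b ≤ 1) :
    ∫⁻ u in Set.Ioo (0:ℝ) 1, ee a b u = ENNReal.ofReal |a - b| := by
  rw [ee_eq_indicator, lintegral_indicator measurableSet_Ioc]
  simp only [lintegral_const, Measure.restrict_restrict measurableSet_Ioc, Set.univ_inter,
    one_mul, Measure.restrict_apply MeasurableSet.univ]
  rw [volume_Ioc_inter_Ioo (le_min h0a h0b) (min_le_max) (max_le ha1 hb1),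
    max_sub_min_eq_abs, abs_sub_comm]

variable (m : Measure ℝ) [IsProbabilityMeasure m]

lemma step_qtl {u : ℝ} (hu : u ∈ Set.Ioo (0:ℝ) 1) (t : ℝ) :
    step (qtl m u) t = step u (cdf m t) := by
  unfold step
  by_cases h : qtl m u ≤ t
  · rw [if_pos h, if_pos ((qtl_le_iff m hu t).mp h)]
  · rw [if_neg h, if_neg (fun h' => h ((qtl_le_iff m hu t).mpr h'))]

end QCW1

namespace QCW1

open ENNReal

variable (μ ν : Measure ℝ) [IsProbabilityMeasure μ] [IsProbabilityMeasure ν]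

lemma measurable_uncurry_ee :
    Measurable (Function.uncurry fun u t => ee (cdf μ t) (cdf ν t) u) := by
  have hstep : ∀ (κ : Measure ℝ), Measurable (fun q : ℝ × ℝ => step q.1 (cdf κ q.2)) := by
    intro κ
    exact measurable_step_prod.comp
      (measurable_fst.prodMk ((monotone_cdf κ).measurable.comp measurable_snd))
  exact ((hstep μ).sub (hstep ν)).add ((hstep ν).sub (hstep μ))

lemma key2 :
    ∫⁻ u in Set.Ioo (0:ℝ) 1, ENNReal.ofReal |qtl μ u - qtl ν u|
      = ∫⁻ t, ENNReal.ofReal |cdf μ t - cdf ν t| := by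
  calc ∫⁻ u in Set.Ioo (0:ℝ) 1, ENNReal.ofReal |qtl μ u - qtl ν u|
      = ∫⁻ u in Set.Ioo (0:ℝ) 1, ∫⁻ t, dd (qtl μ u) (qtl ν u) t :=
        lintegral_congr fun u => (lintegral_dd _ _).symm
    _ = ∫⁻ u in Set.Ioo (0:ℝ) 1, ∫⁻ t, ee (cdf μ t) (cdf ν t) u := by
        refine setLIntegral_congr_fun measurableSet_Ioo (
          (fun u hu => lintegral_congr fun t => ?_))
        unfold dd ee
        rw [step_qtl μ hu t, step_qtl ν hu t]
    _ = ∫⁻ t, ∫⁻ u in Set.Ioo (0:ℝ) 1, ee (cdf μ t) (cdf ν t) u := by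
        exact lintegral_lintegral_swap (measurable_uncurry_ee μ ν).aemeasurable
    _ = ∫⁻ t, ENNReal.ofReal |cdf μ t - cdf ν t| :=
        lintegral_congr fun t =>
          lintegral_ee (cdf_nonneg μ t) (cdf_le_one μ t) (cdf_nonneg ν t) (cdf_le_one ν t)

lemma key3 (π : Measure (ℝ × ℝ)) [IsProbabilityMeasure π]
    (h1 : π.map Prod.fst = μ) (h2 : π.map Prod.snd = ν) :
    ∫⁻ t, ENNReal.ofReal |cdf μ t - cdf ν t| ≤ ∫⁻ p, ENNReal.ofReal |p.1 - p.2| ∂π := by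
  have hd : Measurable (Function.uncurry fun (p : ℝ × ℝ) t => dd p.1 p.2 t) := by
    have h1' : Measurable (fun q : (ℝ × ℝ) × ℝ => step q.1.1 q.2) :=
      measurable_step_prod.comp ((measurable_fst.comp measurable_fst).prodMk measurable_snd)
    have h2' : Measurable (fun q : (ℝ × ℝ) × ℝ => step q.1.2 q.2) :=
      measurable_step_prod.comp ((measurable_snd.comp measurable_fst).prodMk measurable_snd)
    exact (h1'.sub h2').add (h2'.sub h1')
  have hs1 : ∀ t, ∫⁻ p, step p.1 t ∂π = ENNReal.ofReal (cdf μ t) := by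
    intro t
    have : (fun p : ℝ × ℝ => step p.1 t) = (Prod.fst ⁻¹' Set.Iic t).indicator (fun _ => 1) := by
      funext p; by_cases h : p.1 ≤ t <;> simp [step, h, Set.indicator_apply]
    rw [this, lintegral_indicator (measurableSet_Iic.preimage measurable_fst)]
    simp only [lintegral_const, one_mul, Measure.restrict_apply MeasurableSet.univ,
      Set.univ_inter]
    rw [← Measure.map_apply measurable_fst measurableSet_Iic, h1, ofReal_cdf]
  have hs2 : ∀ t, ∫⁻ p, step p.2 t ∂π = ENNReal.ofReal (cdf ν t) := by
    intro t
    have : (fun p : ℝ × ℝ => step p.2 t) = (Prod.snd ⁻¹' Set.Iic t).indicator (fun _ => 1) := by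
      funext p; by_cases h : p.2 ≤ t <;> simp [step, h, Set.indicator_apply]
    rw [this, lintegral_indicator (measurableSet_Iic.preimage measurable_snd)]
    simp only [lintegral_const, one_mul, Measure.restrict_apply MeasurableSet.univ,
      Set.univ_inter]
    rw [← Measure.map_apply measurable_snd measurableSet_Iic, h2, ofReal_cdf]
  calc ∫⁻ t, ENNReal.ofReal |cdf μ t - cdf ν t|
      ≤ ∫⁻ t, ∫⁻ p, dd p.1 p.2 t ∂π := by
        refine lintegral_mono fun t => ?_
        have hm1 : Measurable (fun p : ℝ × ℝ => step p.1 t) :=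
          measurable_step_prod.comp (measurable_fst.prodMk measurable_const)
        have hm2 : Measurable (fun p : ℝ × ℝ => step p.2 t) :=
          measurable_step_prod.comp (measurable_snd.prodMk measurable_const)
        have hA : ENNReal.ofReal (cdf μ t) - ENNReal.ofReal (cdf ν t)
            ≤ ∫⁻ p, (step p.1 t - step p.2 t) ∂π := by
          rw [← hs1 t, ← hs2 t]
          exact lintegral_sub_le _ _ hm2
        have hB : ENNReal.ofReal (cdf ν t) - ENNReal.ofReal (cdf μ t)
            ≤ ∫⁻ p, (step p.2 t - step p.1 t) ∂π := by
          rw [← hs1 t, ← hs2 t]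
          exact lintegral_sub_le _ _ hm1
        rcases le_total (cdf ν t) (cdf μ t) with h | h
        · rw [abs_of_nonneg (sub_nonneg.mpr h), ENNReal.ofReal_sub _ (cdf_nonneg ν t)]
          exact hA.trans (lintegral_mono fun p => le_self_add)
        · rw [abs_of_nonpos (sub_nonpos.mpr h), neg_sub, ENNReal.ofReal_sub _ (cdf_nonneg μ t)]
          exact hB.trans (lintegral_mono fun p => le_add_self)
    _ = ∫⁻ p, (∫⁻ t, dd p.1 p.2 t) ∂π := (lintegral_lintegral_swap hd.aemeasurable).symm
    _ = ∫⁻ p, ENNReal.ofReal |p.1 - p.2| ∂π := lintegral_congr fun p => lintegral_dd _ _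

end QCW1

namespace QCW1

open ENNReal

variable (μ ν : Measure ℝ) [IsProbabilityMeasure μ] [IsProbabilityMeasure ν]

lemma cost_le (π : Measure (ℝ × ℝ)) [IsProbabilityMeasure π]
    (h1 : π.map Prod.fst = μ) (h2 : π.map Prod.snd = ν) :
    ∫⁻ p, ENNReal.ofReal |p.1 - p.2| ∂π
      ≤ ∫⁻ x, ENNReal.ofReal |x| ∂μ + ∫⁻ x, ENNReal.ofReal |x| ∂ν := by
  have hx : Measurable fun x : ℝ => ENNReal.ofReal |x| :=
    ENNReal.measurable_ofReal.comp continuous_abs.measurable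
  calc ∫⁻ p, ENNReal.ofReal |p.1 - p.2| ∂π
      ≤ ∫⁻ p, (ENNReal.ofReal |p.1| + ENNReal.ofReal |p.2|) ∂π := by
        refine lintegral_mono fun p => ?_
        rw [← ENNReal.ofReal_add (abs_nonneg _) (abs_nonneg _)]
        refine ENNReal.ofReal_le_ofReal ?_
        calc |p.1 - p.2| ≤ |p.1| + |-p.2| := sub_eq_add_neg p.1 p.2 ▸ abs_add_le _ _
          _ = |p.1| + |p.2| := by rw [abs_neg]
    _ = ∫⁻ p, ENNReal.ofReal |p.1| ∂π + ∫⁻ p, ENNReal.ofReal |p.2| ∂π :=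
        lintegral_add_left (hx.comp measurable_fst) _
    _ = ∫⁻ x, ENNReal.ofReal |x| ∂μ + ∫⁻ x, ENNReal.ofReal |x| ∂ν := by
        rw [← h1, ← h2, lintegral_map hx measurable_fst, lintegral_map hx measurable_snd]

lemma moment_fin (h : Integrable (fun x => x) μ) : ∫⁻ x, ENNReal.ofReal |x| ∂μ ≠ ∞ := by
  have := (hasFiniteIntegral_iff_norm (fun x : ℝ => x)).mp h.2
  simp only [Real.norm_eq_abs] at this
  exact this.ne

end QCW1

open QCW1 ENNReal

theorem stmt_7 {Ω : Type*} [MeasurableSpace Ω] (P : Measure Ω) [IsProbabilityMeasure P]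
    (μ ν : Measure ℝ) [IsProbabilityMeasure μ] [IsProbabilityMeasure ν]
    (hμ : Integrable (fun x => x) μ) (hν : Integrable (fun x => x) ν)
    (U : Ω → ℝ) (hU : Measurable U)
    (hUlaw : Measure.map U P = (MeasureTheory.volume.restrict (Set.Ioo (0:ℝ) 1)))
    (Finv Ginv : ℝ → ℝ)
    (hFinv : ∀ t, Finv t = sInf {x : ℝ | t ≤ cdf μ x})
    (hGinv : ∀ t, Ginv t = sInf {x : ℝ | t ≤ cdf ν x}) :
    ∫ ω, |Finv (U ω) - Ginv (U ω)| ∂P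
      = sInf {r : ℝ | ∃ π : Measure (ℝ × ℝ), IsProbabilityMeasure π ∧
          π.map Prod.fst = μ ∧ π.map Prod.snd = ν ∧
          r = ∫ p, |p.1 - p.2| ∂π} := by
  have hF : Finv = qtl μ := funext fun t => hFinv t
  have hG : Ginv = qtl ν := funext fun t => hGinv t
  subst hF hG
  set lam0 : Measure ℝ := volume.restrict (Set.Ioo (0:ℝ) 1) with hlam0
  haveI : IsProbabilityMeasure lam0 :=
    ⟨by rw [hlam0, Measure.restrict_apply_univ, Real.volume_Ioo]; norm_num⟩
  have hqa : AEMeasurable (fun u => |qtl μ u - qtl ν u|) lam0 :=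
    continuous_abs.measurable.comp_aemeasurable ((qtl_aemeasurable μ).sub (qtl_aemeasurable ν))
  set I : ℝ≥0∞ := ∫⁻ u, ENNReal.ofReal |qtl μ u - qtl ν u| ∂lam0 with hI
  -- quantile coupling
  have hpair : AEMeasurable (fun u => (qtl μ u, qtl ν u)) lam0 :=
    (qtl_aemeasurable μ).prodMk (qtl_aemeasurable ν)
  set π₀ : Measure (ℝ × ℝ) := lam0.map (fun u => (qtl μ u, qtl ν u)) with hπ₀
  haveI : IsProbabilityMeasure π₀ := Measure.isProbabilityMeasure_map hpair
  have hfst : π₀.map Prod.fst = μ := by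
    rw [hπ₀, AEMeasurable.map_map_of_aemeasurable measurable_fst.aemeasurable hpair]
    exact map_qtl μ
  have hsnd : π₀.map Prod.snd = ν := by
    rw [hπ₀, AEMeasurable.map_map_of_aemeasurable measurable_snd.aemeasurable hpair]
    exact map_qtl ν
  have habs : Continuous fun p : ℝ × ℝ => |p.1 - p.2| := (continuous_fst.sub continuous_snd).abs
  have hcost₀ : ∫⁻ p, ENNReal.ofReal |p.1 - p.2| ∂π₀ = I := by
    rw [hπ₀]
    exact lintegral_map'
      (f := fun p : ℝ × ℝ => ENNReal.ofReal |p.1 - p.2|)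
      (ENNReal.measurable_ofReal.comp habs.measurable).aemeasurable hpair
  have hIne : I ≠ ∞ := by
    rw [← hcost₀]
    exact ne_top_of_le_ne_top
      (by simpa using ENNReal.add_ne_top.mpr ⟨moment_fin μ hμ, moment_fin ν hν⟩)
      (cost_le μ ν π₀ hfst hsnd)
  have hint₀ : ∫ p, |p.1 - p.2| ∂π₀ = I.toReal := by
    rw [integral_eq_lintegral_of_nonneg_ae (Filter.Eventually.of_forall fun p => abs_nonneg _)
      habs.aestronglyMeasurable, hcost₀]
  -- lower bound for any coupling
  have hlb : ∀ r ∈ {r : ℝ | ∃ π : Measure (ℝ × ℝ), IsProbabilityMeasure π ∧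
      π.map Prod.fst = μ ∧ π.map Prod.snd = ν ∧ r = ∫ p, |p.1 - p.2| ∂π}, I.toReal ≤ r := by
    rintro r ⟨π, hprob, h1, h2, rfl⟩
    haveI := hprob
    have hLr : ∫ p, |p.1 - p.2| ∂π = (∫⁻ p, ENNReal.ofReal |p.1 - p.2| ∂π).toReal :=
      integral_eq_lintegral_of_nonneg_ae (Filter.Eventually.of_forall fun p => abs_nonneg _)
        habs.aestronglyMeasurable
    rw [hLr]
    refine ENNReal.toReal_mono ?_ ?_
    · exact ne_top_of_le_ne_top
        (ENNReal.add_ne_top.mpr ⟨moment_fin μ hμ, moment_fin ν hν⟩)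
        (cost_le μ ν π h1 h2)
    · calc I = ∫⁻ t, ENNReal.ofReal |cdf μ t - cdf ν t| := key2 μ ν
        _ ≤ ∫⁻ p, ENNReal.ofReal |p.1 - p.2| ∂π := key3 μ ν π h1 h2
  -- LHS equals I.toReal
  have haesm : AEStronglyMeasurable (fun u => |qtl μ u - qtl ν u|) (Measure.map U P) := by
    rw [hUlaw]; exact hqa.aestronglyMeasurable
  have hLHS : ∫ ω, |qtl μ (U ω) - qtl ν (U ω)| ∂P = I.toReal := by
    calc ∫ ω, |qtl μ (U ω) - qtl ν (U ω)| ∂P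
        = ∫ u, |qtl μ u - qtl ν u| ∂(Measure.map U P) :=
          (integral_map hU.aemeasurable haesm).symm
      _ = I.toReal := by
          rw [hUlaw]
          exact integral_eq_lintegral_of_nonneg_ae
            (Filter.Eventually.of_forall fun u => abs_nonneg _) hqa.aestronglyMeasurable
  rw [hLHS]
  have hmem : I.toReal ∈ {r : ℝ | ∃ π : Measure (ℝ × ℝ), IsProbabilityMeasure π ∧
      π.map Prod.fst = μ ∧ π.map Prod.snd = ν ∧ r = ∫ p, |p.1 - p.2| ∂π} :=
    ⟨π₀, ‹_›, hfst, hsnd, hint₀.symm⟩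
  exact le_antisymm (le_csInf ⟨_, hmem⟩ hlb) (csInf_le ⟨I.toReal, hlb⟩ hmem)
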